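/- Let 0 < t₁ ≤ t₂, set c₁ = cosh t₁ cosh t₂ and c₂ = sinh t₁ sinh t₂, and for θ ∈ ℝ let M(θ) = a_{t₁}·R(θ)·a_{t₂} be the product of matrices in SL(2,ℝ). Then for every continuous function F : ℝ → ℝ, (1/(2π)) ∫_0^{2π} F( trace(M(θ)·M(θ)ᵀ)/2 ) dθ = (1/π) ∫_{t₂−t₁}^{t₂+t₁} F(cosh r) · sinh r / √(c₂² − (c₁ − cosh r)²) dr. -/

import Mathlib

/-!
Writing `M(θ) = a_{t₁} R(θ) a_{t₂}`, a direct computation gives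
`tr (M Mᵀ) / 2 = c₁ + c₂ cos 2θ`. Since `θ ↦ F (c₁ + c₂ cos θ)` is `2π`-periodic and even, the
average over `θ ∈ [0, 2π]` of `F (c₁ + c₂ cos 2θ)` equals the average over `θ ∈ [0, π]` of
`F (c₁ + c₂ cos θ)`. On `[0, π]` the substitution `cosh r = c₁ + c₂ cos θ`, i.e.
`θ = arccos ((cosh r - c₁) / c₂)`, is a decreasing bijection from `[t₂ - t₁, t₂ + t₁]`
(because `cosh (t₂ ∓ t₁) = c₁ ∓ c₂`), with `dθ = - sinh r / √(c₂² - (c₁ - cosh r)²) dr`.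
-/

open scoped Real
open Matrix

noncomputable section

/-- The diagonal matrix `a_t = diag (e^{t/2}, e^{-t/2})` in `SL(2, ℝ)`. -/
def aMat (t : ℝ) : Matrix (Fin 2) (Fin 2) ℝ :=
  !![Real.exp (t / 2), 0; 0, Real.exp (-t / 2)]

/-- The rotation matrix `R(θ)` in `SO(2)`. -/
def rotMat (θ : ℝ) : Matrix (Fin 2) (Fin 2) ℝ :=
  !![Real.cos θ, -Real.sin θ; Real.sin θ, Real.cos θ]

end

open Real Set intervalIntegral MeasureTheory

section Periodic

variable {E : Type*} [NormedAddCommGroup E] [NormedSpace ℝ E] {f : ℝ → E} {T : ℝ}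

theorem Function.Periodic.intervalIntegral_comp_nat_mul (hf : Function.Periodic f T)
    (hint : ∀ t₁ t₂, IntervalIntegrable f volume t₁ t₂) {n : ℕ} (hn : n ≠ 0) :
    ∫ x in 0..T, f (n * x) = ∫ x in 0..T, f x := by
  have hn' : (n : ℝ) ≠ 0 := Nat.cast_ne_zero.2 hn
  have h := hf.intervalIntegral_add_zsmul_eq n 0 hint
  simp only [zero_add, natCast_zsmul] at h
  rw [integral_comp_mul_left _ hn', mul_zero, ← nsmul_eq_mul, h, ← Nat.cast_smul_eq_nsmul ℝ,
    smul_smul, inv_mul_cancel₀ hn', one_smul]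

theorem Function.Periodic.intervalIntegral_zero_two_mul_of_even
    (hf : Function.Periodic f (2 * T)) (heven : Function.Even f)
    (hint : ∀ t₁ t₂, IntervalIntegrable f volume t₁ t₂) :
    ∫ x in 0..2 * T, f x = 2 • ∫ x in 0..T, f x := by
  have hreflect : ∫ x in T..2 * T, f x = ∫ x in 0..T, f x := by
    have h := integral_comp_sub_left (a := 0) (b := T) f (2 * T)
    rw [show 2 * T - T = T by ring, sub_zero] at h
    rw [← h]
    refine integral_congr fun x _ => ?_
    rw [sub_eq_neg_add, hf, heven]
  rw [← integral_add_adjacent_intervals (hint 0 T) (hint T (2 * T)), hreflect, two_nsmul]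

end Periodic

section Substitution

variable {c₁ c₂ : ℝ}

theorem sqrt_sq_sub_sq_eq_mul_sqrt_one_sub {c y : ℝ} (hc : 0 < c) :
    √(c ^ 2 - y ^ 2) = c * √(1 - (y / c) ^ 2) := by
  rw [← sqrt_sq hc.le, ← sqrt_mul (sq_nonneg c), sqrt_sq hc.le]
  congr 1
  field_simp

theorem hasDerivAt_arccos_cosh_sub_div (hc₂ : 0 < c₂) {r : ℝ} (hr : |cosh r - c₁| < c₂) :
    HasDerivAt (fun r => arccos ((cosh r - c₁) / c₂))
      (-(sinh r / √(c₂ ^ 2 - (c₁ - cosh r) ^ 2))) r := by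
  have hu : |(cosh r - c₁) / c₂| < 1 := by
    rwa [abs_div, abs_of_pos hc₂, div_lt_one hc₂]
  obtain ⟨hu₁, hu₂⟩ := abs_lt.1 hu
  refine ((hasDerivAt_arccos hu₁.ne' hu₂.ne).comp r
    (((hasDerivAt_cosh r).sub_const c₁).div_const c₂)).congr_deriv ?_
  rw [← neg_sq (c₁ - cosh r), neg_sub, sqrt_sq_sub_sq_eq_mul_sqrt_one_sub hc₂]
  field_simp

variable {a b : ℝ}

theorem abs_cosh_sub_le_of_mem_Icc (ha : 0 ≤ a) (hca : cosh a = c₁ - c₂)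
    (hcb : cosh b = c₁ + c₂) {r : ℝ} (hr : r ∈ Icc a b) : |cosh r - c₁| ≤ c₂ := by
  have hr₀ : 0 ≤ r := ha.trans hr.1
  have ha_le := cosh_strictMonoOn.monotoneOn ha hr₀ hr.1
  have hb_ge := cosh_strictMonoOn.monotoneOn hr₀ (hr₀.trans hr.2) hr.2
  rw [abs_sub_le_iff]
  constructor <;> linarith

theorem abs_cosh_sub_lt_of_mem_Ioo (ha : 0 ≤ a) (hca : cosh a = c₁ - c₂)
    (hcb : cosh b = c₁ + c₂) {r : ℝ} (hr : r ∈ Ioo a b) : |cosh r - c₁| < c₂ := by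
  have hr₀ : 0 ≤ r := ha.trans hr.1.le
  have ha_lt := cosh_strictMonoOn ha hr₀ hr.1
  have hb_gt := cosh_strictMonoOn hr₀ (hr₀.trans hr.2.le) hr.2
  rw [abs_sub_lt_iff]
  constructor <;> linarith

theorem integral_comp_add_mul_cos_eq_integral_cosh (ha : 0 ≤ a) (hca : cosh a = c₁ - c₂)
    (hcb : cosh b = c₁ + c₂) (hc₂ : 0 < c₂) (hab : a ≤ b) (G : ℝ → ℝ) :
    ∫ θ in 0..π, G (c₁ + c₂ * cos θ)
      = ∫ r in a..b, G (cosh r) * sinh r / √(c₂ ^ 2 - (c₁ - cosh r) ^ 2) := by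
  -- `φ r` is the angle `θ ∈ [0, π]` with `c₁ + c₂ cos θ = cosh r`
  set φ : ℝ → ℝ := fun r => arccos ((cosh r - c₁) / c₂)
  have hcos_φ : ∀ r ∈ uIcc a b, c₁ + c₂ * cos (φ r) = cosh r := fun r hr => by
    rw [uIcc_of_le hab] at hr
    obtain ⟨h₁, h₂⟩ := abs_le.1 (abs_cosh_sub_le_of_mem_Icc ha hca hcb hr)
    rw [cos_arccos (by rw [le_div_iff₀ hc₂]; linarith) (by rw [div_le_one hc₂]; linarith)]
    field_simp
    ring
  have hφa : φ a = π := by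
    simp only [φ, hca, sub_sub_cancel_left, neg_div, div_self hc₂.ne', arccos_neg_one]
  have hφb : φ b = 0 := by
    simp only [φ, hcb, add_sub_cancel_left, div_self hc₂.ne', arccos_one]
  have hφ_cont : ContinuousOn φ (uIcc a b) := by fun_prop
  have hmin : min a b = a := min_eq_left hab
  have hmax : max a b = b := max_eq_right hab
  have hφ_deriv : ∀ r ∈ Ioo (min a b) (max a b),
      HasDerivAt φ (-(sinh r / √(c₂ ^ 2 - (c₁ - cosh r) ^ 2))) r := fun r hr =>
    hasDerivAt_arccos_cosh_sub_div hc₂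
      (abs_cosh_sub_lt_of_mem_Ioo ha hca hcb (by rwa [hmin, hmax] at hr))
  have hφ_anti : ∀ r ∈ Ioo (min a b) (max a b),
      -(sinh r / √(c₂ ^ 2 - (c₁ - cosh r) ^ 2)) ≤ 0 := fun r hr => by
    rw [hmin] at hr
    exact neg_nonpos.2 (div_nonneg (sinh_nonneg_iff.2 (ha.trans hr.1.le)) (sqrt_nonneg _))
  have hsubst := integral_comp_mul_deriv_of_deriv_nonpos (g := fun θ => G (c₁ + c₂ * cos θ))
    hφ_cont hφ_deriv hφ_anti
  rw [hφa, hφb, integral_symm 0 π] at hsubst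
  simp only [mul_neg, intervalIntegral.integral_neg, neg_inj] at hsubst
  rw [← hsubst]
  refine integral_congr fun r hr => ?_
  simp only [Function.comp_apply, hcos_φ r hr]
  ring

end Substitution

theorem trace_mul_transpose_fin_two_of (a b c d : ℝ) :
    trace (!![a, b; c, d] * !![a, b; c, d]ᵀ) = a ^ 2 + b ^ 2 + c ^ 2 + d ^ 2 := by
  rw [trace_fin_two, mul_apply, mul_apply, Fin.sum_univ_two, Fin.sum_univ_two]
  simp only [of_apply, cons_val', cons_val_zero, cons_val_one, cons_val_fin_one, transpose_apply]
  ring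

theorem aMat_mul_rotMat_mul_aMat (t₁ θ t₂ : ℝ) :
    aMat t₁ * rotMat θ * aMat t₂ =
      !![exp (t₁ / 2) * cos θ * exp (t₂ / 2), -(exp (t₁ / 2) * sin θ * exp (-t₂ / 2));
        exp (-t₁ / 2) * sin θ * exp (t₂ / 2), exp (-t₁ / 2) * cos θ * exp (-t₂ / 2)] := by
  ext i j
  fin_cases i <;> fin_cases j <;> simp [aMat, rotMat, mul_apply, Fin.sum_univ_two]

theorem exp_half_sq (t : ℝ) : exp (t / 2) ^ 2 = exp t := by
  rw [← exp_nat_mul]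
  ring_nf

theorem trace_aMat_rotMat_aMat_mul_transpose (t₁ θ t₂ : ℝ) :
    trace ((aMat t₁ * rotMat θ * aMat t₂) * (aMat t₁ * rotMat θ * aMat t₂)ᵀ) / 2
      = cosh t₁ * cosh t₂ + sinh t₁ * sinh t₂ * cos (2 * θ) := by
  rw [aMat_mul_rotMat_mul_aMat, trace_mul_transpose_fin_two_of]
  simp only [mul_pow, neg_sq, exp_half_sq]
  rw [cosh_eq, cosh_eq, sinh_eq, sinh_eq, cos_two_mul, cos_sq']
  ring

/-- Probability-normalized product formula for spherical classes in `SL(2, ℝ)`. -/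
theorem sphClass_product_SL2R (t₁ t₂ : ℝ) (ht₁ : 0 < t₁) (ht : t₁ ≤ t₂)
    (c₁ c₂ : ℝ) (hc₁ : c₁ = Real.cosh t₁ * Real.cosh t₂)
    (hc₂ : c₂ = Real.sinh t₁ * Real.sinh t₂)
    (F : ℝ → ℝ) (hF : Continuous F) :
    (1 / (2 * π)) * ∫ θ in (0 : ℝ)..2 * π,
        F (Matrix.trace ((aMat t₁ * rotMat θ * aMat t₂) *
            (aMat t₁ * rotMat θ * aMat t₂)ᵀ) / 2)
      = (1 / π) * ∫ r in t₂ - t₁..t₂ + t₁,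
          F (Real.cosh r) * Real.sinh r / Real.sqrt (c₂ ^ 2 - (c₁ - Real.cosh r) ^ 2) := by
  set f : ℝ → ℝ := fun θ => F (c₁ + c₂ * cos θ)
  have hf_int : ∀ t t', IntervalIntegrable f volume t t' := fun _ _ =>
    (hF.comp (by fun_prop)).intervalIntegrable _ _
  have hf_per : Function.Periodic f (2 * π) := fun θ => by simp only [f, cos_add_two_pi]
  have hf_even : Function.Even f := fun θ => by simp only [f, cos_neg]
  have hc₂_pos : 0 < c₂ := hc₂ ▸ mul_pos (sinh_pos_iff.2 ht₁) (sinh_pos_iff.2 (ht₁.trans_le ht))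
  have hca : cosh (t₂ - t₁) = c₁ - c₂ := by rw [cosh_sub, hc₁, hc₂]; ring
  have hcb : cosh (t₂ + t₁) = c₁ + c₂ := by rw [cosh_add, hc₁, hc₂]; ring
  have h_double := hf_per.intervalIntegral_comp_nat_mul hf_int two_ne_zero
  simp only [trace_aMat_rotMat_aMat_mul_transpose, ← hc₁, ← hc₂]
  simp only [f, Nat.cast_ofNat] at h_double
  rw [h_double, hf_per.intervalIntegral_zero_two_mul_of_even hf_even hf_int, nsmul_eq_mul,
    Nat.cast_ofNat,
    integral_comp_add_mul_cos_eq_integral_cosh (sub_nonneg.2 ht) hca hcb hc₂_pos (by linarith)]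
  field_simp
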